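/- For any string S and any index 1 ≤ i < |S|, once PD(S[i+1..])[k] is nonzero for some position k (relative to suffix S[i+1..]), the corresponding position in PD(S[i..]) has the same value; i.e., PD(S[i..])[k+1] = PD(S[i+1..])[k] whenever PD(S[i+1..])[k] ≠ 0. -/
import Mathlib


open List

inductive Shape where
  | nil : Shape
  | node : Shape → Shape → Shape
deriving DecidableEq

inductive BTree (α : Type*) where
  | nil : BTree α
  | node : BTree α → α → BTree α → BTree α

def BTree.shape {α : Type*} : BTree α → Shape
  | .nil => .nil
  | .node l _ r => .node l.shape r.shape

def BTree.rootVal {α : Type*} : BTree α → Option α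
  | .nil => none
  | .node _ v _ => some v

section
variable {α : Type*} [LinearOrder α] [Inhabited α]

/-- Parent-distance value at 1-based position `i` of `S`. -/
def pdVal (S : List α) (i : ℕ) : ℕ :=
  let J := (Finset.Ico 1 i).filter (fun j => S.getD (j-1) default ≤ S.getD (i-1) default)
  if h : J.Nonempty then i - J.max' h else 0

/-- Parent-distance encoding of `S` (1-based positions). -/
def PD (S : List α) : List ℕ := (List.range S.length).map (fun k => pdVal S (k+1))

/-- 0-based index of the leftmost minimum of `S`. -/
def leftmostMinIdx (S : List α) : ℕ :=
  ((List.range S.length).argmin (fun j => S.getD j default)).getD 0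

def CTaux : ℕ → List α → BTree α
  | 0, _ => .nil
  | (n+1), S =>
    if S.isEmpty then .nil else
      let i := leftmostMinIdx S
      .node (CTaux n (S.take i)) (S.getD i default) (CTaux n (S.drop (i+1)))

/-- The (labeled) Cartesian tree of `S`. -/
def CT (S : List α) : BTree α := CTaux S.length S

/-- Front pointers of a sequence `u` of naturals (1-based positions `k ≥ 2` with `k - u[k] = 1`). -/
def frontPointers (u : List ℕ) : Finset ℕ :=
  (Finset.Icc 2 u.length).filter (fun k => k - u.getD (k-1) 0 = 1)

/-- `FP(S)[i]`: number of front pointers of `PD(S[i..])` (1-based `i`). -/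
def FPval (S : List α) (i : ℕ) : ℕ := (frontPointers (PD (S.drop (i-1)))).card

/-- The FP encoding of `S`. -/
def FP (S : List α) : List ℕ := (List.range S.length).map (fun k => FPval S (k+1))

end

/-- Nonzero PD values of a suffix are preserved when a character is prepended. -/
theorem stmt5 {α : Type*} [LinearOrder α] [Inhabited α] (S : List α) (i : ℕ)
    (h1 : 1 ≤ i) (h2 : i < S.length) (k : ℕ) (hk1 : 1 ≤ k)
    (hk2 : k ≤ (S.drop i).length) (hnz : pdVal (S.drop i) k ≠ 0) :
    pdVal (S.drop (i-1)) (k+1) = pdVal (S.drop i) k := by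
  have hlt : i - 1 < S.length := by omega
  have hdrop : S.drop (i-1) = S[i-1] :: S.drop i := by
    rw [List.drop_eq_getElem_cons hlt]; congr 2; omega
  set a := S[i-1] with ha
  set T := S.drop i with hT
  rw [hdrop]
  set J := (Finset.Ico 1 k).filter (fun j => T.getD (j-1) default ≤ T.getD (k-1) default)
    with hJdef
  have hJ : J.Nonempty := by
    by_contra hne
    apply hnz
    rw [pdVal]
    simp only [← hJdef]
    rw [dif_neg hne]
  have hgd : (a :: T).getD ((k+1)-1) default = T.getD (k-1) default := by
    have : k + 1 - 1 = (k - 1) + 1 := by omega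
    rw [this, List.getD_cons_succ]
  set J' := (Finset.Ico 1 (k+1)).filter
      (fun j => (a :: T).getD (j-1) default ≤ (a :: T).getD ((k+1)-1) default) with hJ'def
  have hmem : ∀ j ∈ J, j + 1 ∈ J' := by
    intro j hj
    rw [hJdef, Finset.mem_filter, Finset.mem_Ico] at hj
    rw [hJ'def, Finset.mem_filter, Finset.mem_Ico, hgd]
    refine ⟨⟨by omega, by omega⟩, ?_⟩
    have : j + 1 - 1 = (j - 1) + 1 := by omega
    rw [this, List.getD_cons_succ]
    exact hj.2
  have hJ' : J'.Nonempty := ⟨J.max' hJ + 1, hmem _ (J.max'_mem hJ)⟩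
  have hle : ∀ j ∈ J', j ≤ J.max' hJ + 1 := by
    intro j hj
    rcases Nat.lt_or_ge j 2 with h | h
    · have := J.le_max' _ (J.max'_mem hJ)
      have h1' : 1 ≤ J.max' hJ := by
        have hm := Finset.mem_Ico.mp (Finset.mem_filter.mp (J.max'_mem hJ)).1
        omega
      omega
    · rw [hJ'def, Finset.mem_filter, Finset.mem_Ico, hgd] at hj
      have hjm : j - 1 ∈ J := by
        rw [hJdef, Finset.mem_filter, Finset.mem_Ico]
        refine ⟨⟨by omega, by omega⟩, ?_⟩
        have h1' : j - 1 = (j - 1 - 1) + 1 := by omega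
        have h2' : j - 1 - 1 = j - 2 := by omega
        have := hj.2
        rwa [h1', List.getD_cons_succ, h2'] at this
      have := J.le_max' _ hjm
      omega
  have hmax : J'.max' hJ' = J.max' hJ + 1 := by
    apply _root_.le_antisymm
    · exact J'.max'_le hJ' _ (hle)
    · exact J'.le_max' _ (hmem _ (J.max'_mem hJ))
  rw [pdVal, pdVal]
  simp only [← hJdef, ← hJ'def]
  rw [dif_pos hJ, dif_pos hJ', hmax]
  have hmlt : J.max' hJ < k := by
    have hm := Finset.mem_Ico.mp (Finset.mem_filter.mp (J.max'_mem hJ)).1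
    omega
  omega
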